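/- Let A and B be unital C*-algebras, P₁ a nontrivial projection in A, P₂ = 1 - P₁, η a nonzero complex number with |η| ≠ 1, and Φ : A → B a bijective map with Φ(0) = 0 preserving the Jordan η*-product for P ∈ {P₁, P₂}. Then for every A₁₁ ∈ P₁AP₁ and B₁₂ ∈ P₁AP₂, one has Φ(A₁₁ + B₁₂) = Φ(A₁₁) + Φ(B₁₂). -/

import Mathlib

/-!
For a self-adjoint `P`, the Jordan η*-product is `X * P + η • (P * star X) = ψ (X * P)` with
`ψ Y = Y + η • star Y`, and `ψ` is injective when `‖η‖ ≠ 1`. Pick `T` with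
`Φ T = Φ A₁₁ + Φ B₁₂`. Since `B₁₂ * P₁ = 0`, preservation of the product at `P₁` and `Φ 0 = 0`
give `ψ (T * P₁) = ψ (A₁₁ * P₁)`, hence `T * P₁ = A₁₁`; symmetrically, `A₁₁ * (1 - P₁) = 0` gives
`T * (1 - P₁) = B₁₂`. Adding, `T = A₁₁ + B₁₂`.
-/

variable {A B : Type*}
  [NormedRing A] [StarRing A] [CStarRing A] [NormedAlgebra ℂ A] [StarModule ℂ A] [CompleteSpace A]
  [NormedRing B] [StarRing B] [CStarRing B] [NormedAlgebra ℂ B] [StarModule ℂ B] [CompleteSpace B]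

section JordanStarProd

variable {R S : Type*} [Ring R] [StarRing R] [Module ℂ R] [Ring S] [StarRing S] [Module ℂ S]

def jordanStarProd (η : ℂ) (X P : R) : R := X * P + η • (P * star X)

lemma jordanStarProd_add_left (η : ℂ) (X Y P : R) :
    jordanStarProd η (X + Y) P = jordanStarProd η X P + jordanStarProd η Y P := by
  simp only [jordanStarProd, star_add, add_mul, mul_add, smul_add]
  abel

lemma jordanStarProd_of_isSelfAdjoint {P : R} (hP : IsSelfAdjoint P) (η : ℂ) (X : R) :
    jordanStarProd η X P = X * P + η • star (X * P) := by
  rw [jordanStarProd, star_mul, hP.star_eq]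

lemma add_smul_star_injective [StarModule ℂ R] {η : ℂ} (hη : ‖η‖ ≠ 1) :
    Function.Injective (fun X : R => X + η • star X) := by
  suffices h : ∀ X : R, X + η • star X = 0 → X = 0 by
    intro X Y hXY
    refine sub_eq_zero.mp (h _ ?_)
    rw [star_sub, smul_sub]
    linear_combination (norm := module) hXY
  intro X hX
  -- Applying `star` gives `star X = -(conj η) • X`, so `(1 - ‖η‖²) • X = 0`.
  have hstar : star X = -(starRingEnd ℂ η • X) := by
    have := congrArg star hX
    rw [star_add, star_smul, star_star, star_zero, Complex.star_def] at this
    linear_combination (norm := module) this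
  have hscalar : ((1 : ℂ) - (‖η‖ ^ 2 : ℝ)) • X = 0 := by
    rw [hstar, smul_neg, smul_smul, Complex.mul_conj, Complex.normSq_eq_norm_sq] at hX
    linear_combination (norm := module) hX
  refine (smul_eq_zero.mp hscalar).resolve_left ?_
  have : ‖η‖ ^ 2 ≠ 1 := by
    rwa [Ne, pow_eq_one_iff_of_nonneg (norm_nonneg η) two_ne_zero]
  exact_mod_cast sub_ne_zero.mpr this.symm

lemma mul_eq_mul_of_map_eq_add [StarModule ℂ R] {η : ℂ} (hη : ‖η‖ ≠ 1) {Φ : R → S}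
    (hinj : Function.Injective Φ) (h0 : Φ 0 = 0) {P : R} (hP : IsSelfAdjoint P)
    (hΦ : ∀ X, Φ (jordanStarProd η X P) = jordanStarProd η (Φ X) (Φ P))
    {T X Y : R} (hT : Φ T = Φ X + Φ Y) (hY : Y * P = 0) : T * P = X * P := by
  refine add_smul_star_injective hη (hinj ?_)
  have hY0 : jordanStarProd η Y P = 0 := by
    rw [jordanStarProd_of_isSelfAdjoint hP, hY, star_zero, smul_zero, add_zero]
  simp only [← jordanStarProd_of_isSelfAdjoint hP]
  rw [hΦ, hΦ, hT, jordanStarProd_add_left, ← hΦ Y, hY0, h0, add_zero]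

end JordanStarProd

lemma mul_eq_self_of_mul_mul_eq {R : Type*} [Semigroup R] {p a : R} (hp : IsIdempotentElem p)
    (ha : p * a * p = a) : a * p = a := by
  rw [← ha, mul_assoc, hp.eq]

lemma mul_eq_zero_of_mul_mul_one_sub_eq {R : Type*} [Ring R] {p b : R} (hp : IsIdempotentElem p)
    (hb : p * b * (1 - p) = b) : b * p = 0 := by
  rw [← hb, mul_assoc, hp.one_sub_mul_self, mul_zero]

theorem stmt5_general (η : ℂ) (hη1 : ‖η‖ ≠ 1) (P₁ : A)
    (hP : star P₁ = P₁) (hP2 : P₁ * P₁ = P₁)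
    (Φ : A → B) (hbij : Function.Bijective Φ) (h0 : Φ 0 = 0)
    (hΦ : ∀ X : A, ∀ P ∈ ({P₁, 1 - P₁} : Set A),
      Φ (X * P + η • (P * star X)) = Φ X * Φ P + η • (Φ P * star (Φ X)))
    (A₁₁ B₁₂ : A) (hA : P₁ * A₁₁ * P₁ = A₁₁) (hB : P₁ * B₁₂ * (1 - P₁) = B₁₂) :
    Φ (A₁₁ + B₁₂) = Φ A₁₁ + Φ B₁₂ := by
  have hAP : A₁₁ * P₁ = A₁₁ := mul_eq_self_of_mul_mul_eq hP2 hA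
  have hBP : B₁₂ * P₁ = 0 := mul_eq_zero_of_mul_mul_one_sub_eq hP2 hB
  obtain ⟨T, hT⟩ := hbij.surjective (Φ A₁₁ + Φ B₁₂)
  have hTP : T * P₁ = A₁₁ * P₁ :=
    mul_eq_mul_of_map_eq_add hη1 hbij.injective h0 hP (fun X => hΦ X P₁ (by simp)) hT hBP
  have hTQ : T * (1 - P₁) = B₁₂ * (1 - P₁) :=
    mul_eq_mul_of_map_eq_add hη1 hbij.injective h0 ((IsSelfAdjoint.one A).sub hP)
      (fun X => hΦ X (1 - P₁) (by simp)) (hT.trans (add_comm _ _))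
      (by rw [mul_sub, mul_one, hAP, sub_self])
  rw [← hT]
  congr 1
  symm
  calc T = T * P₁ + T * (1 - P₁) := by noncomm_ring
    _ = A₁₁ + B₁₂ := by rw [hTP, hTQ, hAP, mul_sub, mul_one, hBP, sub_zero]

theorem stmt5 (η : ℂ) (hη : η ≠ 0) (hη1 : ‖η‖ ≠ 1) (P₁ : A)
    (hP : star P₁ = P₁) (hP2 : P₁ * P₁ = P₁) (hP0 : P₁ ≠ 0) (hP1 : P₁ ≠ 1)
    (Φ : A → B) (hbij : Function.Bijective Φ) (h0 : Φ 0 = 0)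
    (hΦ : ∀ X : A, ∀ P ∈ ({P₁, 1 - P₁} : Set A),
      Φ (X * P + η • (P * star X)) = Φ X * Φ P + η • (Φ P * star (Φ X)))
    (A₁₁ B₁₂ : A) (hA : P₁ * A₁₁ * P₁ = A₁₁) (hB : P₁ * B₁₂ * (1 - P₁) = B₁₂) :
    Φ (A₁₁ + B₁₂) = Φ A₁₁ + Φ B₁₂ :=
  stmt5_general η hη1 P₁ hP hP2 Φ hbij h0 hΦ A₁₁ B₁₂ hA hB
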